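/- Let Φ : ℝ₊ → ℝ and Ψ : ℝ₊ → ℝ^d be twice continuously differentiable and satisfy the Riccati equations Φ' = F∘Ψ, Φ(0) = 0 and Ψ' = R∘Ψ − λ, Ψ(0) = 0, and assume ⟨λ, e₁⟩ ≠ 0. Let ℓ ∈ ℝ, x ∈ ℝ^d, let θ : ℝ₊ → ℝ be continuous, and define h(τ) = ℓ − ∫₀^τ θ(s)⟨Ψ'(τ−s), e₁⟩ ds − Φ'(τ) − ⟨Ψ'(τ), x⟩. Then h is differentiable at 0 and θ(0) = (1/⟨λ, e₁⟩)·(h'(0) − ⟨λ, b⟩ − Σ_{i=1}^d ⟨λ, βⁱ⟩·xⁱ), i.e. θ(0) = (1/⟨λ, e₁⟩)(h'(0) − F'(0)·λ − ⟨R'(0)·λ, x⟩). -/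

import Mathlib

open Matrix Set

/-!
Differentiating `h` at `0` gives `h'(0) = -θ(0)⟨Ψ'(0), e₁⟩ - Φ''(0) - ⟨Ψ''(0), x⟩`, and all three
terms are read off the Riccati equations at `τ = 0`: `Ψ'(0) = R(0) - λ = -λ`, and because
`Ψ(0) = 0` the quadratic parts of `F` and `Rⁱ` contribute nothing to the derivatives of `F ∘ Ψ`
and `Rⁱ ∘ Ψ` at `0`, so `Φ''(0) = ⟨Ψ'(0), b⟩` and `Ψⁱ''(0) = ⟨Ψ'(0), βⁱ⟩`. The convolution
`∫₀^τ θ(s) q(τ - s) ds` has derivative `θ(0) q(0)` at `0` since its integrand is uniformly close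
to `θ(0) q(0)` on `[0, τ]` when `τ` is small.
-/

section DotProduct

variable {𝕜 ι : Type*} [NontriviallyNormedField 𝕜] [Fintype ι]
  {f g : 𝕜 → ι → 𝕜} {f' g' : ι → 𝕜} {s : Set 𝕜} {x : 𝕜}

theorem HasDerivWithinAt.dotProduct (hf : HasDerivWithinAt f f' s x)
    (hg : HasDerivWithinAt g g' s x) :
    HasDerivWithinAt (fun t => f t ⬝ᵥ g t) (f' ⬝ᵥ g x + f x ⬝ᵥ g') s x := by
  simp only [_root_.dotProduct, ← Finset.sum_add_distrib]
  exact HasDerivWithinAt.fun_sum fun i _ =>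
    (hasDerivWithinAt_pi.1 hf i).fun_mul (hasDerivWithinAt_pi.1 hg i)

theorem HasDerivWithinAt.mulVec (M : Matrix ι ι 𝕜) (hf : HasDerivWithinAt f f' s x) :
    HasDerivWithinAt (fun t => M *ᵥ f t) (M *ᵥ f') s x :=
  hasDerivWithinAt_pi.2 fun i =>
    ((hasDerivWithinAt_const x s (M i)).dotProduct hf).congr_deriv (by simp; rfl)

end DotProduct

noncomputable def quadraticFun {ι : Type*} [Fintype ι] (M : Matrix ι ι ℝ) (v u : ι → ℝ) : ℝ :=
  1 / 2 * (u ⬝ᵥ M *ᵥ u) + u ⬝ᵥ v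

section QuadraticFun

variable {ι : Type*} [Fintype ι] (M : Matrix ι ι ℝ) (v : ι → ℝ)

theorem continuous_quadraticFun : Continuous (quadraticFun M v) := by
  unfold quadraticFun
  fun_prop

@[simp]
theorem quadraticFun_zero : quadraticFun M v 0 = 0 := by
  simp [quadraticFun]

theorem HasDerivWithinAt.quadraticFun_comp_of_eq_zero {f : ℝ → ι → ℝ} {f' : ι → ℝ}
    {s : Set ℝ} {x : ℝ} (hf : HasDerivWithinAt f f' s x) (hfx : f x = 0) :
    HasDerivWithinAt (fun t => quadraticFun M v (f t)) (f' ⬝ᵥ v) s x := by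
  have := ((hf.dotProduct (hf.mulVec M)).const_mul (1 / 2)).fun_add
    (hf.dotProduct (hasDerivWithinAt_const x s v))
  simpa [quadraticFun, hfx] using this

end QuadraticFun

theorem hasDerivWithinAt_integral_antidiagonal_zero {E : Type*} [NormedAddCommGroup E]
    [NormedSpace ℝ E] [CompleteSpace E] {g : ℝ × ℝ → E}
    (hg : ContinuousOn g (Ici 0 ×ˢ Ici 0)) :
    HasDerivWithinAt (fun τ => ∫ s in (0 : ℝ)..τ, g (s, τ - s)) (g 0) (Ici 0) 0 := by
  rw [hasDerivWithinAt_iff_isLittleO, Asymptotics.isLittleO_iff]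
  intro ε hε
  obtain ⟨δ, hδ, hgδ⟩ := Metric.continuousWithinAt_iff.1 (hg 0 ⟨self_mem_Ici, self_mem_Ici⟩) ε hε
  filter_upwards [Ico_mem_nhdsGE hδ] with τ ⟨hτ0, hτδ⟩
  have hmaps : MapsTo (fun s => (s, τ - s)) (Icc 0 τ) (Ici 0 ×ˢ Ici 0) :=
    fun s hs => ⟨hs.1, sub_nonneg.2 hs.2⟩
  have hint : IntervalIntegrable (fun s => g (s, τ - s)) MeasureTheory.volume 0 τ :=
    (hg.comp (by fun_prop) hmaps).intervalIntegrable_of_Icc hτ0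
  have hclose : ∀ s ∈ uIoc (0 : ℝ) τ, ‖g (s, τ - s) - g 0‖ ≤ ε := by
    intro s hs
    rw [uIoc_of_le hτ0] at hs
    rw [← dist_eq_norm]
    refine (hgδ (hmaps (Ioc_subset_Icc_self hs)) ?_).le
    rw [Prod.dist_eq, max_lt_iff]
    simp only [Prod.fst_zero, Prod.snd_zero, Real.dist_eq, sub_zero,
      abs_of_nonneg hs.1.le, abs_of_nonneg (sub_nonneg.2 hs.2)]
    constructor <;> linarith [hs.1, hs.2]
  calc ‖(∫ s in (0 : ℝ)..τ, g (s, τ - s)) - (∫ s in (0 : ℝ)..0, g (s, 0 - s)) - (τ - 0) • g 0‖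
      = ‖∫ s in (0 : ℝ)..τ, (g (s, τ - s) - g 0)‖ := by
        rw [intervalIntegral.integral_sub hint intervalIntegrable_const,
          intervalIntegral.integral_const]
        simp
    _ ≤ ε * |τ - 0| := intervalIntegral.norm_integral_le_of_norm_le_const hclose
    _ = ε * ‖τ - 0‖ := rfl

theorem stmt_10_general (d : ℕ) (ℓ : ℝ)
    (e₁ : Fin d → ℝ)
    (a : Matrix (Fin d) (Fin d) ℝ) (α : Fin d → Matrix (Fin d) (Fin d) ℝ)
    (b l : Fin d → ℝ) (β : Fin d → Fin d → ℝ)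
    (hle₁ : l ⬝ᵥ e₁ ≠ 0)
    (F : (Fin d → ℝ) → ℝ) (R : (Fin d → ℝ) → Fin d → ℝ)
    (hF : ∀ u, F u = (1 / 2) * (u ⬝ᵥ a.mulVec u) + u ⬝ᵥ b)
    (hR : ∀ u i, R u i = (1 / 2) * (u ⬝ᵥ (α i).mulVec u) + u ⬝ᵥ β i)
    (Φ' : ℝ → ℝ) (Ψ Ψ' : ℝ → Fin d → ℝ)
    (hΨ' : ∀ τ ∈ Ici (0 : ℝ), HasDerivWithinAt Ψ (Ψ' τ) (Ici 0) τ)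
    (hRic1 : ∀ τ ∈ Ici (0 : ℝ), Φ' τ = F (Ψ τ))
    (hRic2 : ∀ τ ∈ Ici (0 : ℝ), Ψ' τ = R (Ψ τ) - l) (hΨ0 : Ψ 0 = 0)
    (x : Fin d → ℝ) (θ : ℝ → ℝ) (hθ : ContinuousOn θ (Ici 0))
    (h : ℝ → ℝ)
    (hh : ∀ τ, h τ =
      ℓ - (∫ s in (0 : ℝ)..τ, θ s * (Ψ' (τ - s) ⬝ᵥ e₁)) - Φ' τ - Ψ' τ ⬝ᵥ x) :
    ∃ h'0 : ℝ, HasDerivWithinAt h h'0 (Ici 0) 0 ∧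
      θ 0 = (1 / (l ⬝ᵥ e₁)) * (h'0 - l ⬝ᵥ b - ∑ i, (l ⬝ᵥ β i) * x i) := by
  have hFq : F = quadraticFun a b := funext hF
  have hRq : ∀ u i, R u i = quadraticFun (α i) (β i) u := hR
  have hΨ'0 : Ψ' 0 = -l := by
    ext i
    simp [hRic2 0 self_mem_Ici, hRq, hΨ0]
  have hΦ'd : HasDerivWithinAt Φ' (-(l ⬝ᵥ b)) (Ici 0) 0 := by
    refine ((hΨ' 0 self_mem_Ici).quadraticFun_comp_of_eq_zero a b hΨ0).congr_of_mem
      (fun τ hτ => by rw [hRic1 τ hτ, hFq]) self_mem_Ici |>.congr_deriv ?_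
    rw [hΨ'0, neg_dotProduct]
  have hΨ'd : HasDerivWithinAt Ψ' (fun i => -(l ⬝ᵥ β i)) (Ici 0) 0 := by
    refine hasDerivWithinAt_pi.2 fun i => ?_
    refine (((hΨ' 0 self_mem_Ici).quadraticFun_comp_of_eq_zero (α i) (β i) hΨ0).sub_const
      (l i)).congr_of_mem (fun τ hτ => by simp [hRic2 τ hτ, hRq]) self_mem_Ici |>.congr_deriv ?_
    rw [hΨ'0, neg_dotProduct]
  have hΨ'c : ContinuousOn Ψ' (Ici 0) := by
    have hΨc : ContinuousOn Ψ (Ici 0) := fun τ hτ => (hΨ' τ hτ).continuousWithinAt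
    refine (((continuous_pi fun i => ?_).comp_continuousOn hΨc).sub continuousOn_const).congr hRic2
    simpa only [hRq] using continuous_quadraticFun (α i) (β i)
  have hconv := hasDerivWithinAt_integral_antidiagonal_zero
    (g := fun p => θ p.1 * (Ψ' p.2 ⬝ᵥ e₁))
    ((hθ.comp continuousOn_fst fun p hp => hp.1).mul
      ((continuous_id.dotProduct continuous_const).comp_continuousOn
        (hΨ'c.comp continuousOn_snd fun p hp => hp.2)))
  refine ⟨θ 0 * (l ⬝ᵥ e₁) + l ⬝ᵥ b + ∑ i, (l ⬝ᵥ β i) * x i, ?_, by field_simp; ring⟩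
  rw [funext hh]
  refine (((hconv.const_sub ℓ).fun_sub hΦ'd).fun_sub
    (hΨ'd.dotProduct (hasDerivWithinAt_const 0 _ x))).congr_deriv ?_
  simp [hΨ'0, dotProduct, Finset.sum_neg_distrib]

/-- The short end of the Hull–White extension.
If (Φ, Ψ) solve the Riccati equations Φ' = F∘Ψ, Φ(0) = 0, Ψ' = R∘Ψ − λ, Ψ(0) = 0 with
⟨λ, e₁⟩ ≠ 0, and h(τ) = ℓ − ∫₀^τ θ(s)⟨Ψ'(τ−s), e₁⟩ ds − Φ'(τ) − ⟨Ψ'(τ), x⟩ for a continuous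
θ, then h is differentiable at 0 and
θ(0) = (1/⟨λ, e₁⟩)(h'(0) − ⟨λ, b⟩ − Σᵢ ⟨λ, βⁱ⟩ xⁱ) = (1/⟨λ, e₁⟩)(h'(0) − F'(0)·λ − ⟨R'(0)·λ, x⟩). -/
theorem stmt_10 (d : ℕ) (hd : 1 ≤ d) (ℓ : ℝ)
    (e₁ : Fin d → ℝ) (he₁ : e₁ = fun j : Fin d => if (j : ℕ) = 0 then (1 : ℝ) else 0)
    (a : Matrix (Fin d) (Fin d) ℝ) (α : Fin d → Matrix (Fin d) (Fin d) ℝ)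
    (b l : Fin d → ℝ) (β : Fin d → Fin d → ℝ)
    (ha : a.IsSymm) (hα : ∀ i, (α i).IsSymm)
    (hle₁ : l ⬝ᵥ e₁ ≠ 0)
    (F : (Fin d → ℝ) → ℝ) (R : (Fin d → ℝ) → Fin d → ℝ)
    (hF : ∀ u, F u = (1 / 2) * (u ⬝ᵥ a.mulVec u) + u ⬝ᵥ b)
    (hR : ∀ u i, R u i = (1 / 2) * (u ⬝ᵥ (α i).mulVec u) + u ⬝ᵥ β i)
    (Φ Φ' Φ'' : ℝ → ℝ) (Ψ Ψ' Ψ'' : ℝ → Fin d → ℝ)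
    (hΦ' : ∀ τ ∈ Ici (0 : ℝ), HasDerivWithinAt Φ (Φ' τ) (Ici 0) τ)
    (hΦ'' : ∀ τ ∈ Ici (0 : ℝ), HasDerivWithinAt Φ' (Φ'' τ) (Ici 0) τ)
    (hΦ''c : ContinuousOn Φ'' (Ici 0))
    (hΨ' : ∀ τ ∈ Ici (0 : ℝ), HasDerivWithinAt Ψ (Ψ' τ) (Ici 0) τ)
    (hΨ'' : ∀ τ ∈ Ici (0 : ℝ), HasDerivWithinAt Ψ' (Ψ'' τ) (Ici 0) τ)
    (hΨ''c : ContinuousOn Ψ'' (Ici 0))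
    (hRic1 : ∀ τ ∈ Ici (0 : ℝ), Φ' τ = F (Ψ τ)) (hΦ0 : Φ 0 = 0)
    (hRic2 : ∀ τ ∈ Ici (0 : ℝ), Ψ' τ = R (Ψ τ) - l) (hΨ0 : Ψ 0 = 0)
    (x : Fin d → ℝ) (θ : ℝ → ℝ) (hθ : ContinuousOn θ (Ici 0))
    (h : ℝ → ℝ)
    (hh : ∀ τ, h τ =
      ℓ - (∫ s in (0 : ℝ)..τ, θ s * (Ψ' (τ - s) ⬝ᵥ e₁)) - Φ' τ - Ψ' τ ⬝ᵥ x) :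
    ∃ h'0 : ℝ, HasDerivWithinAt h h'0 (Ici 0) 0 ∧
      θ 0 = (1 / (l ⬝ᵥ e₁)) * (h'0 - l ⬝ᵥ b - ∑ i, (l ⬝ᵥ β i) * x i) :=
  stmt_10_general d ℓ e₁ a α b l β hle₁ F R hF hR Φ' Ψ Ψ' hΨ' hRic1 hRic2 hΨ0 x θ hθ h hh
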